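/- arXiv:2311.17021 — 4 statements merged into one kernel-verified Lean document; each statement's English description precedes it below -/
import Mathlib

section
/- Let X_n be a Binomial random variable with n trials and success probability p_n = a·n^{λ−1} for fixed constants a > 0 and λ ∈ (0,1). Then for every δ > 0 and every λ̃ > 0 with λ̃ < λ, we have n^δ · P(X_n ≤ a·n^{λ̃}) → 0 as n → ∞. -/
open Filter MeasureTheory
open scoped ENNReal NNReal

/-- The binomial `PMF` with an `ℝ≥0∞` success probability, as `PMF.binomial` was defined in
Mathlib of December 2024 (the current `PMF.binomial` takes `p : ℝ≥0` and is deprecated). -/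
noncomputable def PMF.binomialENNReal (p : ℝ≥0∞) (h : p ≤ 1) (n : ℕ) : PMF (Fin (n + 1)) :=
  .ofFintype (fun i => p ^ (i : ℕ) * (1 - p) ^ ((Fin.last n - i) : ℕ) * (n.choose i : ℕ)) (by
    convert (add_pow p (1 - p) n).symm
    · rw [Finset.sum_fin_eq_sum_range]
      apply Finset.sum_congr rfl
      intro i hi
      rw [Finset.mem_range] at hi
      rw [dif_pos hi, Fin.last]
    · simp [h])

/-!
If `X ~ Binomial(n, p)` has mean `μ = n p`, then `P(X = k) ≤ (e μ)^k e^{-μ}`, because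
`C(n, k) ≤ n^k` and `(1 - p)^{n-k} ≤ e^{-p(n-k)} ≤ e^{k - μ}`. Summing over the `n + 1` values
`k ≤ M = a n^λ̃` gives `P(X ≤ M) ≤ (n + 1) exp(M log(e μ) - μ)` as soon as `e μ ≥ 1`. With
`μ = a n^λ`, the exponent is `-a n^λ + O(n^λ̃ log n)`, and since `λ̃ < λ` this is `-a n^λ + o(n^λ)`,
which swamps the `O(log n)` contributed by the polynomial factor `n^δ (n + 1)`.
-/

open Real Asymptotics

theorem pow_mul_one_sub_pow_mul_choose_le {q : ℝ} (hq₀ : 0 ≤ q) (hq₁ : q ≤ 1) {n k : ℕ}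
    (hk : k ≤ n) :
    q ^ k * (1 - q) ^ (n - k) * n.choose k ≤ (exp 1 * (n * q)) ^ k * exp (-(n * q)) :=
  calc q ^ k * (1 - q) ^ (n - k) * n.choose k
      ≤ q ^ k * exp (-q) ^ (n - k) * (n : ℝ) ^ k := by
        have : 0 ≤ 1 - q := by linarith
        gcongr
        · exact one_sub_le_exp_neg q
        · exact_mod_cast Nat.choose_le_pow n k
    _ = (n * q) ^ k * exp (q * k) * exp (-(n * q)) := by
        rw [← exp_nat_mul, Nat.cast_sub hk, mul_assoc _ (exp (q * k)), ← exp_add]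
        ring_nf
    _ ≤ (n * q) ^ k * exp 1 ^ k * exp (-(n * q)) := by
        rw [exp_one_pow]
        gcongr
        nlinarith [(Nat.cast_nonneg k : (0 : ℝ) ≤ k)]
    _ = (exp 1 * (n * q)) ^ k * exp (-(n * q)) := by ring

namespace PMF

theorem binomialENNReal_apply_toReal_le (p : ℝ≥0∞) (h : p ≤ 1) (n : ℕ) (k : Fin (n + 1)) :
    (binomialENNReal p h n k).toReal ≤
      (exp 1 * (n * p.toReal)) ^ (k : ℕ) * exp (-(n * p.toReal)) := by
  rw [binomialENNReal, ofFintype_apply, Fin.val_last, ENNReal.toReal_mul, ENNReal.toReal_mul,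
    ENNReal.toReal_pow, ENNReal.toReal_pow, ENNReal.toReal_sub_of_le h ENNReal.one_ne_top,
    ENNReal.toReal_one, ENNReal.toReal_natCast]
  exact pow_mul_one_sub_pow_mul_choose_le ENNReal.toReal_nonneg
    (by simpa using ENNReal.toReal_mono ENNReal.one_ne_top h) k.is_le

theorem binomialENNReal_lowerTail_le (p : ℝ≥0∞) (h : p ≤ 1) (n : ℕ) (M : ℝ)
    (hμ : 1 ≤ exp 1 * (n * p.toReal)) :
    (∑ k : Fin (n + 1), if (k : ℝ) ≤ M then (binomialENNReal p h n k).toReal else 0) ≤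
      (n + 1) * ((exp 1 * (n * p.toReal)) ^ M * exp (-(n * p.toReal))) :=
  calc (∑ k : Fin (n + 1), if (k : ℝ) ≤ M then (binomialENNReal p h n k).toReal else 0)
      ≤ ∑ _k : Fin (n + 1), (exp 1 * (n * p.toReal)) ^ M * exp (-(n * p.toReal)) := by
        refine Finset.sum_le_sum fun k _ => ?_
        split_ifs with hk
        · refine (binomialENNReal_apply_toReal_le p h n k).trans ?_
          rw [← rpow_natCast]
          gcongr
        · positivity
    _ = (n + 1) * ((exp 1 * (n * p.toReal)) ^ M * exp (-(n * p.toReal))) := by simp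

end PMF

theorem isLittleO_rpow_mul_const_add_mul_log {s t : ℝ} (hst : s < t) (c d : ℝ) :
    (fun x : ℝ => x ^ s * (c + d * log x)) =o[atTop] fun x => x ^ t := by
  have hpos : 0 < t - s := sub_pos.mpr hst
  have hlog : (fun x : ℝ => c + d * log x) =o[atTop] fun x => x ^ (t - s) :=
    (isLittleO_const_left.mpr <| .inr <|
        tendsto_norm_atTop_atTop.comp (tendsto_rpow_atTop hpos)).add
      ((isLittleO_log_rpow_atTop hpos).const_mul_left d)
  refine ((isBigO_refl (fun x : ℝ => x ^ s) atTop).mul_isLittleO hlog).trans_eventuallyEq ?_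
  filter_upwards [eventually_gt_atTop 0] with x hx
  rw [← rpow_add hx, add_sub_cancel]

theorem tendsto_sub_const_mul_atBot_of_isLittleO {α : Type*} {l : Filter α} {f g : α → ℝ}
    {c : ℝ} (hc : 0 < c) (hg : Tendsto g l atTop) (hf : f =o[l] g) :
    Tendsto (fun x => f x - c * g x) l atBot := by
  have hratio : Tendsto (fun x => f x / g x - c) l (nhds (-c)) := by
    simpa using hf.tendsto_div_nhds_zero.sub_const c
  refine (hg.atTop_mul_neg (neg_lt_zero.mpr hc) hratio).congr' ?_
  filter_upwards [hg.eventually_ne_atTop 0] with x hx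
  field_simp

theorem tendsto_rpow_mul_rpow_mul_exp_neg_nhds_zero {a s t : ℝ} (ha : 0 < a) (ht : 0 < t)
    (hst : s < t) (r : ℝ) :
    Tendsto (fun x : ℝ => x ^ r * ((exp 1 * (a * x ^ t)) ^ (a * x ^ s) * exp (-(a * x ^ t))))
      atTop (nhds 0) := by
  have hexponent : (fun x : ℝ => r * log x + a * (x ^ s * ((1 + log a) + t * log x))) =o[atTop]
      fun x => x ^ t :=
    ((isLittleO_log_rpow_atTop ht).const_mul_left r).add
      ((isLittleO_rpow_mul_const_add_mul_log hst _ _).const_mul_left a)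
  refine (tendsto_exp_atBot.comp <|
    tendsto_sub_const_mul_atBot_of_isLittleO ha (tendsto_rpow_atTop ht) hexponent).congr' ?_
  filter_upwards [eventually_gt_atTop 0] with x hx
  have hμ : 0 < exp 1 * (a * x ^ t) := by positivity
  rw [Function.comp_apply, rpow_def_of_pos hx r, rpow_def_of_pos hμ, log_mul (exp_pos 1).ne'
    (by positivity), log_mul ha.ne' (by positivity), log_exp, log_rpow hx, ← exp_add, ← exp_add]
  ring_nf

theorem binomial_lower_tail_superpoly_general
    (a lam lamt delta : ℝ) (ha : 0 < a) (hlam : lam ∈ Set.Ioo (0:ℝ) 1)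
    (hlt : lamt < lam)
    (p : ℕ → ℝ≥0∞) (hp : ∀ n, p n ≤ 1)
    (hpval : ∀ᶠ n : ℕ in atTop, (p n).toReal = a * (n : ℝ) ^ (lam - 1) ∧ (p n) ≠ ⊤) :
    Tendsto
      (fun n : ℕ =>
        (n : ℝ) ^ delta *
          (∑ k : Fin (n + 1),
            if (k : ℝ) ≤ a * (n : ℝ) ^ lamt then ((PMF.binomialENNReal (p n) (hp n) n) k).toReal
            else 0))
      atTop (nhds 0) := by
  have hbound := ((tendsto_rpow_mul_rpow_mul_exp_neg_nhds_zero ha hlam.1 hlt (delta + 1)).comp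
    tendsto_natCast_atTop_atTop).const_mul 2
  rw [mul_zero] at hbound
  have hmean : ∀ᶠ n : ℕ in atTop, (n : ℝ) * (p n).toReal = a * (n : ℝ) ^ lam := by
    filter_upwards [hpval, eventually_gt_atTop 0] with n hpn hn
    rw [hpn.1, rpow_sub_one (by positivity)]
    field_simp
  have hlarge : ∀ᶠ n : ℕ in atTop, 1 ≤ exp 1 * (a * (n : ℝ) ^ lam) :=
    (((tendsto_rpow_atTop hlam.1).comp tendsto_natCast_atTop_atTop).const_mul_atTop ha
      |>.const_mul_atTop (exp_pos 1)).eventually_ge_atTop 1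
  refine squeeze_zero' (Eventually.of_forall fun n => ?_) ?_ hbound
  · exact mul_nonneg (by positivity) (Finset.sum_nonneg fun k _ => by split_ifs <;> positivity)
  filter_upwards [hmean, hlarge, eventually_ge_atTop 1] with n hmean hlarge hn
  set B := (exp 1 * (a * (n : ℝ) ^ lam)) ^ (a * (n : ℝ) ^ lamt) * exp (-(a * n ^ lam))
  have htail := PMF.binomialENNReal_lowerTail_le (p n) (hp n) n (a * (n : ℝ) ^ lamt)
    (hmean ▸ hlarge)
  rw [hmean] at htail
  have hn' : (1 : ℝ) ≤ n := by exact_mod_cast hn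
  calc _ ≤ (n : ℝ) ^ delta * ((n + 1) * B) := by gcongr
    _ ≤ (n : ℝ) ^ delta * (2 * n * B) := by gcongr; linarith
    _ = 2 * ((n : ℝ) ^ (delta + 1) * B) := by rw [rpow_add_one (by positivity)]; ring

/-- Lemma A.6 (binomial lower tail): if `X_n ~ Binomial(n, p_n)` with
`p_n = a·n^{λ-1}` (for large `n`), `a > 0`, `λ ∈ (0,1)`, then for every `δ > 0`
and `0 < λ̃ < λ`, `n^δ · P(X_n ≤ a·n^{λ̃}) → 0`. -/
theorem binomial_lower_tail_superpoly
    (a lam lamt delta : ℝ) (ha : 0 < a) (hlam : lam ∈ Set.Ioo (0:ℝ) 1)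
    (hlamt : 0 < lamt) (hlt : lamt < lam) (hdelta : 0 < delta)
    (p : ℕ → ℝ≥0∞) (hp : ∀ n, p n ≤ 1)
    (hpval : ∀ᶠ n : ℕ in atTop, (p n).toReal = a * (n : ℝ) ^ (lam - 1) ∧ (p n) ≠ ⊤) :
    Tendsto
      (fun n : ℕ =>
        (n : ℝ) ^ delta *
          (∑ k : Fin (n + 1),
            if (k : ℝ) ≤ a * (n : ℝ) ^ lamt then ((PMF.binomialENNReal (p n) (hp n) n) k).toReal
            else 0))
      atTop (nhds 0) :=
  binomial_lower_tail_superpoly_general a lam lamt delta ha hlam hlt p hp hpval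
end

section
/- Let Z be a random variable taking values in a finite set Z of real numbers, and suppose there exist constants p̲ > 0 and c > 0 such that P(Z = z) ≥ p̲ for all z in the support, and (z − z')² ≥ c for all distinct z, z' in the support. Let K_0 = |Z| and fix K with 2 ≤ K ≤ K_0. Let m* minimize E[(Z − m(Z))²] over all functions m : Z → ℝ whose image has at most K points. Then the image of m* satisfies: (a) P(m*(Z) = α) ≥ p̲ for every α in the image of m*, and (b) (α − α')² ≥ c for all distinct α, α' in the image of m*. -/
/-- Lemma 1 (properties of the K-means approximation): if `Z` has finite support `S`
with all point masses at least `p̲ > 0` and pairwise squared separation at least `c > 0`,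
and `m*` minimizes `E[(Z − m(Z))²]` over maps with at most `K` values (`2 ≤ K ≤ K₀ = |S|`),
then every value of `m*` carries mass at least `p̲` and the values of `m*` are pairwise
separated by at least `c` in squared distance. -/
theorem kmeans_approx_mass_and_separation
    (S : Finset ℝ) (hS : S.Nonempty) (w : ℝ → ℝ) (pbar c : ℝ)
    (hpbar : 0 < pbar) (hc : 0 < c)
    (hsum : ∑ z ∈ S, w z = 1)
    (hw : ∀ z ∈ S, pbar ≤ w z)
    (hsep : ∀ z ∈ S, ∀ z' ∈ S, z ≠ z' → c ≤ (z - z') ^ 2)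
    (K K₀ : ℕ) (hK₀ : S.card = K₀) (hK2 : 2 ≤ K) (hKK₀ : K ≤ K₀)
    (mstar : ℝ → ℝ) (hcard : (S.image mstar).card ≤ K)
    (hmin : ∀ m : ℝ → ℝ, (S.image m).card ≤ K →
      ∑ z ∈ S, w z * (z - mstar z) ^ 2 ≤ ∑ z ∈ S, w z * (z - m z) ^ 2) :
    (∀ α ∈ S.image mstar, pbar ≤ ∑ z ∈ S.filter (fun z => mstar z = α), w z) ∧
      (∀ α ∈ S.image mstar, ∀ α' ∈ S.image mstar, α ≠ α' → c ≤ (α - α') ^ 2) := by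
  have hwpos : ∀ z ∈ S, 0 < w z := fun z hz => lt_of_lt_of_le hpbar (hw z hz)
  -- Voronoi property: each point is assigned to a nearest value of mstar
  have voronoi : ∀ z ∈ S, ∀ β ∈ S.image mstar, (z - mstar z) ^ 2 ≤ (z - β) ^ 2 := by
    intro z hz β hβ
    set m : ℝ → ℝ := fun x => if x = z then β else mstar x with hm
    have hmsub : S.image m ⊆ S.image mstar := by
      intro y hy
      obtain ⟨x, hx, hxy⟩ := Finset.mem_image.mp hy
      by_cases hxz : x = z
      · simp only [hm, hxz, if_pos rfl] at hxy; exact hxy ▸ hβ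
      · simp only [hm, if_neg hxz] at hxy
        exact hxy ▸ Finset.mem_image_of_mem mstar hx
    have hmc : (S.image m).card ≤ K := le_trans (Finset.card_le_card hmsub) hcard
    have h := hmin m hmc
    have h1 : ∑ x ∈ S.erase z, w x * (x - mstar x) ^ 2
        = ∑ x ∈ S.erase z, w x * (x - m x) ^ 2 := by
      refine Finset.sum_congr rfl fun x hx => ?_
      have : x ≠ z := Finset.ne_of_mem_erase hx
      simp [hm, this]
    have h2 := Finset.add_sum_erase S (fun x => w x * (x - mstar x) ^ 2) hz
    have h3 := Finset.add_sum_erase S (fun x => w x * (x - m x) ^ 2) hz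
    have hmz : m z = β := by simp [hm]
    rw [← h2, ← h3] at h
    simp only [hmz, h1] at h
    have hterm : w z * (z - mstar z) ^ 2 ≤ w z * (z - β) ^ 2 := by linarith
    exact le_of_mul_le_mul_left (by linarith [hterm]) (hwpos z hz)
  -- replacing the value α on its whole cluster by any β cannot improve
  have replace : ∀ α ∈ S.image mstar, ∀ β : ℝ,
      ∑ z ∈ S.filter (fun z => mstar z = α), w z * (z - α) ^ 2
        ≤ ∑ z ∈ S.filter (fun z => mstar z = α), w z * (z - β) ^ 2 := by
    intro α hα β
    set m : ℝ → ℝ := fun x => if mstar x = α then β else mstar x with hm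
    have hmsub : S.image m ⊆ insert β ((S.image mstar).erase α) := by
      intro y hy
      obtain ⟨x, hx, hxy⟩ := Finset.mem_image.mp hy
      by_cases hxα : mstar x = α
      · simp only [hm, if_pos hxα] at hxy
        exact hxy ▸ Finset.mem_insert_self β _
      · simp only [hm, if_neg hxα] at hxy
        exact hxy ▸ Finset.mem_insert_of_mem
          (Finset.mem_erase.mpr ⟨hxα, Finset.mem_image_of_mem mstar hx⟩)
    have hpos : 1 ≤ (S.image mstar).card :=
      Finset.card_pos.mpr ⟨α, hα⟩
    have hmc : (S.image m).card ≤ K := by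
      calc (S.image m).card ≤ (insert β ((S.image mstar).erase α)).card :=
            Finset.card_le_card hmsub
        _ ≤ ((S.image mstar).erase α).card + 1 := Finset.card_insert_le _ _
        _ = (S.image mstar).card - 1 + 1 := by rw [Finset.card_erase_of_mem hα]
        _ = (S.image mstar).card := Nat.sub_add_cancel hpos
        _ ≤ K := hcard
    have h := hmin m hmc
    have split1 := Finset.sum_filter_add_sum_filter_not S (fun z => mstar z = α)
      (fun z => w z * (z - mstar z) ^ 2)
    have split2 := Finset.sum_filter_add_sum_filter_not S (fun z => mstar z = α)
      (fun z => w z * (z - m z) ^ 2)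
    rw [← split1, ← split2] at h
    have e1 : ∑ z ∈ S.filter (fun z => mstar z = α), w z * (z - mstar z) ^ 2
        = ∑ z ∈ S.filter (fun z => mstar z = α), w z * (z - α) ^ 2 := by
      refine Finset.sum_congr rfl fun x hx => ?_
      rw [(Finset.mem_filter.mp hx).2]
    have e2 : ∑ z ∈ S.filter (fun z => mstar z = α), w z * (z - m z) ^ 2
        = ∑ z ∈ S.filter (fun z => mstar z = α), w z * (z - β) ^ 2 := by
      refine Finset.sum_congr rfl fun x hx => ?_
      simp [hm, (Finset.mem_filter.mp hx).2]
    have e3 : ∑ z ∈ S.filter (fun z => ¬ mstar z = α), w z * (z - mstar z) ^ 2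
        = ∑ z ∈ S.filter (fun z => ¬ mstar z = α), w z * (z - m z) ^ 2 := by
      refine Finset.sum_congr rfl fun x hx => ?_
      simp [hm, (Finset.mem_filter.mp hx).2]
    rw [e1, e2, e3] at h
    linarith
  -- the value α lies between min and max of its cluster
  have cluster_ne : ∀ α ∈ S.image mstar, (S.filter (fun z => mstar z = α)).Nonempty := by
    intro α hα
    obtain ⟨z₀, hz₀, hz₀α⟩ := Finset.mem_image.mp hα
    exact ⟨z₀, Finset.mem_filter.mpr ⟨hz₀, hz₀α⟩⟩
  have le_max : ∀ α, ∀ hα : α ∈ S.image mstar,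
      α ≤ (S.filter (fun z => mstar z = α)).max' (cluster_ne α hα) := by
    intro α hα
    set A := S.filter (fun z => mstar z = α) with hA
    set x := A.max' (cluster_ne α hα) with hx
    by_contra hlt
    push_neg at hlt
    have hrep := replace α hα x
    have hxA : x ∈ A := A.max'_mem _
    have hstrict : ∑ z ∈ A, w z * (z - x) ^ 2 < ∑ z ∈ A, w z * (z - α) ^ 2 := by
      refine Finset.sum_lt_sum (fun i hi => ?_) ⟨x, hxA, ?_⟩
      · have hiz : i ≤ x := A.le_max' i hi
        have hwi : 0 < w i := hwpos i (Finset.mem_of_mem_filter i hi)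
        have : (i - x) ^ 2 ≤ (i - α) ^ 2 := by nlinarith
        nlinarith
      · have hwx : 0 < w x := hwpos x (Finset.mem_of_mem_filter x hxA)
        have : (x - x) ^ 2 < (x - α) ^ 2 := by nlinarith
        nlinarith
    linarith
  have min_le : ∀ α, ∀ hα : α ∈ S.image mstar,
      (S.filter (fun z => mstar z = α)).min' (cluster_ne α hα) ≤ α := by
    intro α hα
    set A := S.filter (fun z => mstar z = α) with hA
    set x := A.min' (cluster_ne α hα) with hx
    by_contra hlt
    push_neg at hlt
    have hrep := replace α hα x
    have hxA : x ∈ A := A.min'_mem _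
    have hstrict : ∑ z ∈ A, w z * (z - x) ^ 2 < ∑ z ∈ A, w z * (z - α) ^ 2 := by
      refine Finset.sum_lt_sum (fun i hi => ?_) ⟨x, hxA, ?_⟩
      · have hiz : x ≤ i := A.min'_le i hi
        have hwi : 0 < w i := hwpos i (Finset.mem_of_mem_filter i hi)
        have : (i - x) ^ 2 ≤ (i - α) ^ 2 := by nlinarith
        nlinarith
      · have hwx : 0 < w x := hwpos x (Finset.mem_of_mem_filter x hxA)
        have : (x - x) ^ 2 < (x - α) ^ 2 := by nlinarith
        nlinarith
    linarith
  -- main separation claim for ordered pairs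
  have main : ∀ α ∈ S.image mstar, ∀ α' ∈ S.image mstar, α < α' → c ≤ (α - α') ^ 2 := by
    intro α hα α' hα' hlt
    set A := S.filter (fun z => mstar z = α) with hA
    set A' := S.filter (fun z => mstar z = α') with hA'
    set x := A.max' (cluster_ne α hα) with hx
    set y := A'.min' (cluster_ne α' hα') with hy
    have hxA : x ∈ A := A.max'_mem _
    have hyA : y ∈ A' := A'.min'_mem _
    have hxS : x ∈ S := Finset.mem_of_mem_filter x hxA
    have hyS : y ∈ S := Finset.mem_of_mem_filter y hyA
    have hxα : mstar x = α := (Finset.mem_filter.mp hxA).2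
    have hyα : mstar y = α' := (Finset.mem_filter.mp hyA).2
    have hαx : α ≤ x := le_max α hα
    have hyα' : y ≤ α' := min_le α' hα'
    -- Voronoi inequalities
    have hv1 : (x - α) ^ 2 ≤ (x - α') ^ 2 := by
      have := voronoi x hxS α' hα'
      rwa [hxα] at this
    have hv2 : (y - α') ^ 2 ≤ (y - α) ^ 2 := by
      have := voronoi y hyS α hα
      rwa [hyα] at this
    have hxmid : x ≤ (α + α') / 2 := by nlinarith
    have hymid : (α + α') / 2 ≤ y := by nlinarith
    have hxy : x ≠ y := fun h => (ne_of_lt hlt) (by rw [← hxα, ← hyα, h])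
    have hcxy : c ≤ (x - y) ^ 2 := hsep x hxS y hyS hxy
    have hxlty : x < y := lt_of_le_of_ne (le_trans hxmid hymid) hxy
    have h1 : 0 ≤ α' - α - (y - x) := by linarith
    have h2 : 0 ≤ α' - α + (y - x) := by linarith
    nlinarith [mul_nonneg h1 h2]
  refine ⟨?_, ?_⟩
  · intro α hα
    obtain ⟨z₀, hz₀, hz₀α⟩ := Finset.mem_image.mp hα
    have hz₀f : z₀ ∈ S.filter (fun z => mstar z = α) := Finset.mem_filter.mpr ⟨hz₀, hz₀α⟩
    calc pbar ≤ w z₀ := hw z₀ hz₀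
      _ ≤ ∑ z ∈ S.filter (fun z => mstar z = α), w z :=
        Finset.single_le_sum (fun i hi => (hwpos i (Finset.mem_of_mem_filter i hi)).le) hz₀f
  · intro α hα α' hα' hne
    rcases lt_or_gt_of_ne hne with h | h
    · exact main α hα α' hα' h
    · have := main α' hα' α hα h
      nlinarith [this]
end

section
/- Let Z be a random variable with finite support {z_1 < z_2 < … < z_m} ⊂ ℝ. For 2 ≤ K ≤ m, any minimizer m* of E[(Z − m(Z))²] over functions m with |image(m)| ≤ K induces a contiguous partition: each level set {z : m*(z) = α} is a set of consecutive support points z_j, z_{j+1}, …, z_ℓ (an interval in the ordering of the support). -/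
/-- Contiguity of the optimal one-dimensional clustering (Fisher 1958): any minimizer
`m*` of `E[(Z − m(Z))²]` over functions with at most `K` distinct values on the finite
support `S` of `Z` has level sets that are intervals in the ordering of the support:
if `z₁ ≤ z₂ ≤ z₃` are support points and `m*(z₁) = m*(z₃)`, then `m*(z₂) = m*(z₁)`. -/
theorem kmeans_optimal_clusters_contiguous
    (S : Finset ℝ) (hS : S.Nonempty) (w : ℝ → ℝ)
    (hsum : ∑ z ∈ S, w z = 1)
    (hw : ∀ z ∈ S, 0 < w z)
    (K : ℕ) (hK2 : 2 ≤ K) (hKcard : K ≤ S.card)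
    (mstar : ℝ → ℝ) (hcard : (S.image mstar).card ≤ K)
    (hmin : ∀ m : ℝ → ℝ, (S.image m).card ≤ K →
      ∑ z ∈ S, w z * (z - mstar z) ^ 2 ≤ ∑ z ∈ S, w z * (z - m z) ^ 2) :
    ∀ z₁ ∈ S, ∀ z₂ ∈ S, ∀ z₃ ∈ S, z₁ ≤ z₂ → z₂ ≤ z₃ →
      mstar z₁ = mstar z₃ → mstar z₂ = mstar z₁ := by
  -- Key: each point is assigned to a (weakly) nearest center.
  have key : ∀ z₀ ∈ S, ∀ z' ∈ S, z' ≠ z₀ →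
      (z₀ - mstar z₀) ^ 2 ≤ (z₀ - mstar z') ^ 2 := by
    intro z₀ hz₀ z' hz' hne
    set m' : ℝ → ℝ := Function.update mstar z₀ (mstar z') with hm'
    have himg : S.image m' ⊆ S.image mstar := by
      intro y hy
      rcases Finset.mem_image.mp hy with ⟨z, hz, rfl⟩
      by_cases h : z = z₀
      · subst h
        simp only [hm', Function.update_self]
        exact Finset.mem_image_of_mem _ hz'
      · simp only [hm', Function.update_of_ne h]
        exact Finset.mem_image_of_mem _ hz
    have hle := hmin m' (le_trans (Finset.card_le_card himg) hcard)
    rw [← Finset.add_sum_erase S _ hz₀, ← Finset.add_sum_erase S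
        (fun z => w z * (z - m' z) ^ 2) hz₀] at hle
    have hrest : ∑ z ∈ S.erase z₀, w z * (z - m' z) ^ 2
        = ∑ z ∈ S.erase z₀, w z * (z - mstar z) ^ 2 := by
      refine Finset.sum_congr rfl fun z hz => ?_
      rw [hm', Function.update_of_ne (Finset.ne_of_mem_erase hz)]
    rw [hrest] at hle
    have h0 : w z₀ * (z₀ - mstar z₀) ^ 2 ≤ w z₀ * (z₀ - mstar z') ^ 2 := by
      have : m' z₀ = mstar z' := Function.update_self _ _ _
      rw [this] at hle; linarith
    have hwpos := hw z₀ hz₀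
    exact le_of_mul_le_mul_left h0 hwpos
  intro z₁ hz₁ z₂ hz₂ z₃ hz₃ h12 h23 h13
  by_cases e12 : z₁ = z₂
  · rw [e12]
  by_cases e23 : z₂ = z₃
  · rw [e23, h13]
  set a := mstar z₁ with ha
  set b := mstar z₂ with hb
  have h1 : (z₁ - a) ^ 2 ≤ (z₁ - b) ^ 2 := key z₁ hz₁ z₂ hz₂ (fun h => e12 h.symm)
  have h2 : (z₂ - b) ^ 2 ≤ (z₂ - a) ^ 2 := key z₂ hz₂ z₁ hz₁ e12
  have h3 : (z₃ - a) ^ 2 ≤ (z₃ - b) ^ 2 := by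
    have := key z₃ hz₃ z₂ hz₂ e23
    rwa [← h13] at this
  by_contra hab
  rcases lt_or_gt_of_ne (fun h : a = b => hab h.symm) with hlt | hgt
  · -- a < b : from h3, 2z₃ ≤ a+b; from h2, 2z₂ ≥ a+b; z₂ ≤ z₃ ⇒ z₂ = z₃
    have hz3 : 2 * z₃ ≤ a + b := by nlinarith
    have hz2 : a + b ≤ 2 * z₂ := by nlinarith
    exact e23 (by linarith)
  · -- b < a : from h1, 2z₁ ≥ a+b; from h2, 2z₂ ≤ a+b; z₁ ≤ z₂ ⇒ z₁ = z₂
    have hz1 : a + b ≤ 2 * z₁ := by nlinarith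
    have hz2 : 2 * z₂ ≤ a + b := by nlinarith
    exact e12 (by linarith)
end

section
/- Let U, Z be random variables with E[U | Z] = 0 a.s. and E[U² | Z] = σ² a.s. For any square-integrable function m of Z with Var(m(Z)) > 0 and D satisfying Cov(D, m(Z)) ≠ 0, the asymptotic variance of the IV moment estimator, given by σ²·Var(m(Z)) / Cov(D, m(Z))², is minimized over m by m₀(z) = E[D | Z = z], with minimal value σ² / Var(m₀(Z)). -/
/-!
By the pull-out property of conditional expectation, every square-integrable instrument `X`
measurable with respect to `σ(Z)` satisfies `Cov(D, X) = Cov(m₀(Z), X)`. Cauchy–Schwarz bounds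
the square of the latter by `Var(m₀(Z)) · Var(X)`, with equality at `X = m₀(Z)`, where
`Cov(D, m₀(Z)) = Var(m₀(Z))`.
-/

open MeasureTheory ProbabilityTheory

/-- Covariance of two real random variables. -/
noncomputable def cov {Ω : Type*} [MeasurableSpace Ω] (μ : Measure Ω) (X Y : Ω → ℝ) : ℝ :=
  (∫ ω, X ω * Y ω ∂μ) - (∫ ω, X ω ∂μ) * (∫ ω, Y ω ∂μ)

section

variable {Ω : Type*} {mΩ : MeasurableSpace Ω} {μ : Measure Ω}

lemma cov_eq_covariance [IsProbabilityMeasure μ] {X Y : Ω → ℝ} (hX : MemLp X 2 μ)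
    (hY : MemLp Y 2 μ) : cov μ X Y = cov[X, Y; μ] :=
  (covariance_eq_sub hX hY).symm

lemma MeasureTheory.MemLp.inner_toLp_eq_integral_mul {f g : Ω → ℝ} (hf : MemLp f 2 μ)
    (hg : MemLp g 2 μ) :
    inner ℝ (hf.toLp f) (hg.toLp g) = ∫ ω, f ω * g ω ∂μ := by
  rw [L2.inner_def]
  refine integral_congr_ae ?_
  filter_upwards [hf.coeFn_toLp, hg.coeFn_toLp] with ω hfω hgω
  simp [hfω, hgω, mul_comm]

lemma sq_integral_mul_le_integral_sq_mul_integral_sq {f g : Ω → ℝ} (hf : MemLp f 2 μ)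
    (hg : MemLp g 2 μ) :
    (∫ ω, f ω * g ω ∂μ) ^ 2 ≤ (∫ ω, f ω ^ 2 ∂μ) * ∫ ω, g ω ^ 2 ∂μ := by
  simpa only [sq, ← hf.inner_toLp_eq_integral_mul hg, ← hf.inner_toLp_eq_integral_mul hf,
    ← hg.inner_toLp_eq_integral_mul hg] using real_inner_mul_inner_self_le (hf.toLp f) (hg.toLp g)

lemma sq_covariance_le_variance_mul_variance [IsProbabilityMeasure μ] {X Y : Ω → ℝ}
    (hX : MemLp X 2 μ) (hY : MemLp Y 2 μ) :
    cov[X, Y; μ] ^ 2 ≤ Var[X; μ] * Var[Y; μ] := by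
  rw [covariance, variance_eq_integral hX.aemeasurable, variance_eq_integral hY.aemeasurable]
  exact sq_integral_mul_le_integral_sq_mul_integral_sq (hX.sub (memLp_const _))
    (hY.sub (memLp_const _))

lemma covariance_condExp_left [IsProbabilityMeasure μ] {m : MeasurableSpace Ω} (hm : m ≤ mΩ)
    {D X : Ω → ℝ} (hD : MemLp D 2 μ) (hX : MemLp X 2 μ)
    (hXm : AEStronglyMeasurable[m] X μ) :
    cov[μ[D | m], X; μ] = cov[D, X; μ] := by
  have hpull : μ[X * D | m] =ᵐ[μ] X * μ[D | m] :=
    condExp_mul_of_aestronglyMeasurable_left hXm (hX.integrable_mul hD) (hD.integrable one_le_two)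
  have hmul : ∫ ω, (μ[D | m] * X) ω ∂μ = ∫ ω, (D * X) ω ∂μ := by
    rw [mul_comm, ← integral_congr_ae hpull, integral_condExp hm, mul_comm]
  rw [covariance_eq_sub (hD.condExp one_le_two) hX, covariance_eq_sub hD hX, hmul,
    integral_condExp hm]

lemma covariance_congr_ae {X X' Y Y' : Ω → ℝ} (hX : X =ᵐ[μ] X') (hY : Y =ᵐ[μ] Y') :
    cov[X, Y; μ] = cov[X', Y'; μ] := by
  rw [covariance, covariance, integral_congr_ae hX, integral_congr_ae hY]
  refine integral_congr_ae ?_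
  filter_upwards [hX, hY] with ω hXω hYω
  rw [hXω, hYω]

lemma covariance_eq_covariance_of_ae_eq_condExp [IsProbabilityMeasure μ] {m : MeasurableSpace Ω}
    (hm : m ≤ mΩ) {D X Y : Ω → ℝ} (hD : MemLp D 2 μ) (hX : MemLp X 2 μ)
    (hXm : AEStronglyMeasurable[m] X μ) (hY : Y =ᵐ[μ] μ[D | m]) :
    cov[D, X; μ] = cov[Y, X; μ] := by
  rw [← covariance_condExp_left hm hD hX hXm, covariance_congr_ae hY.symm .rfl]

end

theorem optimal_instrument_minimizes_asymptotic_variance_general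
    {Ω β : Type*} [MeasurableSpace Ω] [MeasurableSpace β]
    (μ : Measure Ω) [IsProbabilityMeasure μ]
    (D : Ω → ℝ) (Z : Ω → β) (hZ : Measurable Z) (σ2 : ℝ) (hσ2 : 0 ≤ σ2)
    (hD : MemLp D 2 μ)
    (m₀Z : Ω → ℝ)
    (hm₀Z : m₀Z =ᵐ[μ] μ[D | MeasurableSpace.comap Z inferInstance])
    (hm₀var : 0 < variance m₀Z μ)
    (m : β → ℝ) (hm : Measurable m)
    (hmZ : MemLp (fun ω => m (Z ω)) 2 μ)
    (hrel : cov μ D (fun ω => m (Z ω)) ≠ 0) :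
    σ2 / variance m₀Z μ ≤
        σ2 * variance (fun ω => m (Z ω)) μ / (cov μ D (fun ω => m (Z ω))) ^ 2 ∧
      σ2 * variance m₀Z μ / (cov μ D m₀Z) ^ 2 = σ2 / variance m₀Z μ := by
  have hle : MeasurableSpace.comap Z inferInstance ≤ ‹MeasurableSpace Ω› := hZ.comap_le
  have hm₀ : MemLp m₀Z 2 μ := (hD.condExp one_le_two).ae_eq hm₀Z.symm
  have hm₀meas : AEStronglyMeasurable[MeasurableSpace.comap Z inferInstance] m₀Z μ :=
    stronglyMeasurable_condExp.aestronglyMeasurable.congr hm₀Z.symm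
  have hmZmeas : AEStronglyMeasurable[MeasurableSpace.comap Z inferInstance]
      (fun ω => m (Z ω)) μ :=
    (hm.comp (comap_measurable Z)).aestronglyMeasurable
  have hCS : cov μ D (fun ω => m (Z ω)) ^ 2 ≤
      variance m₀Z μ * variance (fun ω => m (Z ω)) μ := by
    rw [cov_eq_covariance hD hmZ,
      covariance_eq_covariance_of_ae_eq_condExp hle hD hmZ hmZmeas hm₀Z]
    exact sq_covariance_le_variance_mul_variance hm₀ hmZ
  have hcov_m₀ : cov μ D m₀Z = variance m₀Z μ := by
    rw [cov_eq_covariance hD hm₀,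
      covariance_eq_covariance_of_ae_eq_condExp hle hD hm₀ hm₀meas hm₀Z,
      covariance_self hm₀.aemeasurable]
  refine ⟨?_, ?_⟩
  · rw [div_le_div_iff₀ hm₀var (by positivity)]
    nlinarith [mul_le_mul_of_nonneg_left hCS hσ2]
  · rw [hcov_m₀]
    field_simp

/-- Optimality of the instrument `m₀(Z) = E[D | Z]` under homoskedasticity:
the asymptotic variance `σ²·Var(m(Z))/Cov(D, m(Z))²` of the IV estimator based on any
square-integrable instrument `m(Z)` is at least `σ²/Var(m₀(Z))`, and the instrument
`m₀` attains this minimal value. -/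
theorem optimal_instrument_minimizes_asymptotic_variance
    {Ω β : Type*} [MeasurableSpace Ω] [MeasurableSpace β]
    (μ : Measure Ω) [IsProbabilityMeasure μ]
    (D U : Ω → ℝ) (Z : Ω → β) (hZ : Measurable Z) (σ2 : ℝ) (hσ2 : 0 ≤ σ2)
    (hexog : μ[U | MeasurableSpace.comap Z inferInstance] =ᵐ[μ] 0)
    (hhomosked : μ[(fun ω => U ω ^ 2) | MeasurableSpace.comap Z inferInstance]
      =ᵐ[μ] (fun _ => σ2))
    (hD : MemLp D 2 μ)
    (m₀Z : Ω → ℝ)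
    (hm₀Z : m₀Z =ᵐ[μ] μ[D | MeasurableSpace.comap Z inferInstance])
    (hm₀var : 0 < variance m₀Z μ)
    (m : β → ℝ) (hm : Measurable m)
    (hmZ : MemLp (fun ω => m (Z ω)) 2 μ)
    (hvar : 0 < variance (fun ω => m (Z ω)) μ)
    (hrel : cov μ D (fun ω => m (Z ω)) ≠ 0) :
    σ2 / variance m₀Z μ ≤
        σ2 * variance (fun ω => m (Z ω)) μ / (cov μ D (fun ω => m (Z ω))) ^ 2 ∧
      σ2 * variance m₀Z μ / (cov μ D m₀Z) ^ 2 = σ2 / variance m₀Z μ :=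
  optimal_instrument_minimizes_asymptotic_variance_general μ D Z hZ σ2 hσ2 hD m₀Z hm₀Z hm₀var m hm
    hmZ hrel
end
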